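/- Let F = x + F₂ + F₃ + F₄ and G = z + G₂ + ⋯ + G₆ with Fᵢ, Gᵢ ∈ ℂ[x,y,z] homogeneous of degree i. Suppose F₄ = H² and G₆ = αH³, where H is a squarefree homogeneous polynomial of degree 2 and α ∈ ℂ, α ≠ 0. If deg[F,G] < 9, then G₅ = (3/2)·α·H·F₃. -/

import Mathlib

open MvPolynomial

noncomputable def jacMinor (f g : MvPolynomial (Fin 3) ℂ) (i j : Fin 3) :
    MvPolynomial (Fin 3) ℂ :=
  pderiv i f * pderiv j g - pderiv j f * pderiv i g

/-!
The degree-7 part of each bracket minor is `J(F₃, αH³) + J(H², G₅) = 2H · J(H, P)` with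
`P = G₅ - (3/2)αHF₃`, so `deg[F,G] < 9` forces `J(H, P) = 0`. By Euler's identity this gives
`5 P ∂ᵢH = 2 H ∂ᵢP`. Since `H` is squarefree, `H ∣ P ∂ᵢH` for all `i` implies `H ∣ P` (a prime
factor dividing `H` and all `∂ᵢH` would have vanishing partials, hence be constant); the relation
then descends to `P / H` with `5` replaced by `3`, and so on, so a nonzero `P` would have degree
divisible by `deg H = 2`.
-/

theorem Squarefree.dvd_of_forall_prime_dvd {A : Type*} [CommMonoidWithZero A]
    [UniqueFactorizationMonoid A] [Nontrivial A] {a b : A} (ha : Squarefree a)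
    (h : ∀ p, Prime p → p ∣ a → p ∣ b) : a ∣ b := by
  induction a using UniqueFactorizationMonoid.induction_on_prime with
  | h₁ => exact absurd ha not_squarefree_zero
  | h₂ x hx => exact hx.dvd
  | h₃ a p _ hp ih =>
    have hpa : ¬ p ∣ a := fun hpa => hp.not_isUnit (ha p (mul_dvd_mul_left p hpa))
    obtain ⟨c, rfl⟩ := ih (ha.of_mul_right) fun q hq hqa => h q hq (hqa.mul_left p)
    obtain ⟨d, rfl⟩ := (hp.dvd_or_dvd (h p hp (dvd_mul_right p a))).resolve_left hpa
    exact ⟨d, (mul_left_comm a p d).trans (mul_assoc p a d).symm⟩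

namespace MvPolynomial

variable {σ R : Type*}

theorem homogeneousComponent_sum_mul_sum [CommSemiring R] {ι κ : Type*} (s : Finset ι)
    (t : Finset κ) {f : ι → MvPolynomial σ R} {g : κ → MvPolynomial σ R} {df : ι → ℕ}
    {dg : κ → ℕ} (hf : ∀ a ∈ s, (f a).IsHomogeneous (df a))
    (hg : ∀ b ∈ t, (g b).IsHomogeneous (dg b)) (k : ℕ) :
    homogeneousComponent k ((∑ a ∈ s, f a) * ∑ b ∈ t, g b) =
      ∑ a ∈ s, ∑ b ∈ t, if df a + dg b = k then f a * g b else 0 := by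
  simp only [Finset.sum_mul_sum, map_sum]
  refine Finset.sum_congr rfl fun a ha => Finset.sum_congr rfl fun b hb => ?_
  rw [homogeneousComponent_of_mem ((hf a ha).mul (hg b hb))]
  simp only [eq_comm]

theorem homogeneousComponent_add_mul_of_isHomogeneous [CommSemiring R] {p q : MvPolynomial σ R}
    {m : ℕ} (hp : p.IsHomogeneous m) (k : ℕ) :
    homogeneousComponent (m + k) (p * q) = p * homogeneousComponent k q := by
  let _ : GradedAlgebra (homogeneousSubmodule σ R) := gradedAlgebra
  rw [← decomposition.decompose'_apply, ← decomposition.decompose'_apply]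
  exact DirectSum.coe_decompose_mul_add_of_left_mem _ ((mem_homogeneousSubmodule m p).mpr hp)

theorem IsHomogeneous.of_mul_left [CommRing R] [IsDomain R] {p q : MvPolynomial σ R} {m n : ℕ}
    (hp : p.IsHomogeneous m) (hp0 : p ≠ 0) (h : (p * q).IsHomogeneous n) :
    q.IsHomogeneous (n - m) := by
  intro d hd
  have hk : homogeneousComponent (m + d.degree) (p * q) ≠ 0 := by
    rw [homogeneousComponent_add_mul_of_isHomogeneous hp]
    refine mul_ne_zero hp0 fun h0 => hd ?_
    simpa [coeff_homogeneousComponent] using congrArg (coeff d) h0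
  rw [homogeneousComponent_of_mem h] at hk
  have hdeg : d.degree = n - m := by grind
  rwa [Finsupp.degree_eq_weight_one, ← Pi.one_def] at hdeg

theorem totalDegree_pderiv_lt [CommSemiring R] {p : MvPolynomial σ R} {i : σ}
    (h : pderiv i p ≠ 0) : (pderiv i p).totalDegree < p.totalDegree := by
  have key : ∀ m ∈ (pderiv i p).support, m.degree < p.totalDegree := by
    intro m hm
    have hc : m + Finsupp.single i 1 ∈ p.support := by
      rw [mem_support_iff, coeff_pderiv] at hm
      exact mem_support_iff.mpr (left_ne_zero_of_mul hm)
    have : (m + Finsupp.single i 1).degree ≤ p.totalDegree := le_totalDegree hc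
    rw [map_add, Finsupp.degree_single] at this
    omega
  obtain ⟨m, hm⟩ := support_nonempty.mpr h
  exact (Finset.sup_lt_iff (lt_of_le_of_lt (Nat.zero_le _) (key m hm))).mpr key

theorem pderiv_eq_zero_of_dvd_pderiv [CommRing R] [IsDomain R] {p : MvPolynomial σ R} {i : σ}
    (h : p ∣ pderiv i p) : pderiv i p = 0 := by
  by_contra h0
  exact (totalDegree_le_of_dvd_of_isDomain h h0).not_gt (totalDegree_pderiv_lt h0)

theorem eq_C_of_forall_pderiv_eq_zero [CommRing R] [IsDomain R] [CharZero R]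
    {p : MvPolynomial σ R} (h : ∀ i, pderiv i p = 0) : p = C (coeff 0 p) := by
  classical
  ext m
  rw [coeff_C]
  split_ifs with hm
  · rw [hm]
  obtain ⟨i, hi⟩ := Finsupp.ne_iff.mp (Ne.symm hm)
  have := coeff_pderiv (i := i) p (m - Finsupp.single i 1)
  rw [h, coeff_zero, Finsupp.sub_add_single_one_cancel hi] at this
  exact (mul_eq_zero.mp this.symm).resolve_right (Nat.cast_add_one_ne_zero _)

theorem IsHomogeneous.natCast_mul_mul_pderiv_eq [CommSemiring R] [Fintype σ]
    {H P : MvPolynomial σ R} {m n : ℕ} (hH : H.IsHomogeneous m) (hP : P.IsHomogeneous n)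
    (hJ : ∀ i j, pderiv i H * pderiv j P = pderiv j H * pderiv i P) (i : σ) :
    (n : MvPolynomial σ R) * P * pderiv i H = m * H * pderiv i P := by
  calc (n : MvPolynomial σ R) * P * pderiv i H
      = ∑ j, X j * (pderiv i H * pderiv j P) := by
        rw [← nsmul_eq_mul, ← hP.sum_X_mul_pderiv, Finset.sum_mul]
        exact Finset.sum_congr rfl fun j _ => by ring
    _ = ∑ j, X j * (pderiv j H * pderiv i P) := by simp only [hJ i]
    _ = m * H * pderiv i P := by
        rw [← nsmul_eq_mul, ← hH.sum_X_mul_pderiv, Finset.sum_mul]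
        exact Finset.sum_congr rfl fun j _ => by ring

section Field

variable {K : Type*} [Field K] [CharZero K]

theorem exists_not_dvd_pderiv_of_squarefree {p H : MvPolynomial σ K} (hp : Prime p)
    (hpH : p ∣ H) (hH : Squarefree H) : ∃ i, ¬ p ∣ pderiv i H := by
  by_contra! h
  obtain ⟨r, rfl⟩ := hpH
  have hpr : ¬ p ∣ r := fun hpr => hp.not_isUnit (hH p (mul_dvd_mul_left p hpr))
  have hp_eq := eq_C_of_forall_pderiv_eq_zero fun i => pderiv_eq_zero_of_dvd_pderiv <| by
    refine (hp.dvd_or_dvd ?_).resolve_right hpr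
    have := h i
    rwa [pderiv_mul, dvd_add_left (dvd_mul_right p _)] at this
  have hc : coeff 0 p ≠ 0 := fun h0 => hp.ne_zero (by rw [hp_eq, h0, C_0])
  exact hp.not_isUnit (hp_eq ▸ hc.isUnit.map C)

theorem Squarefree.dvd_of_forall_dvd_mul_pderiv {H Q : MvPolynomial σ K} (hH : Squarefree H)
    (h : ∀ i, H ∣ Q * pderiv i H) : H ∣ Q :=
  hH.dvd_of_forall_prime_dvd fun _ hp hpH =>
    let ⟨i, hi⟩ := exists_not_dvd_pderiv_of_squarefree hp hpH hH
    (hp.dvd_or_dvd (hpH.trans (h i))).resolve_right hi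

theorem IsHomogeneous.dvd_of_natCast_mul_mul_pderiv_eq {H P : MvPolynomial σ K} {m n : ℕ}
    (hH : H.IsHomogeneous m) (hm : 0 < m) (hsf : Squarefree H) (hP : P.IsHomogeneous n)
    (hP0 : P ≠ 0) (hrel : ∀ i, (n : MvPolynomial σ K) * P * pderiv i H = m * H * pderiv i P) :
    m ∣ n := by
  induction n using Nat.strong_induction_on generalizing P with
  | _ n ih =>
  rcases Nat.eq_zero_or_pos n with rfl | hn
  · exact dvd_zero m
  have hH0 := hsf.ne_zero
  have hn_unit : IsUnit (n : MvPolynomial σ K) := by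
    rw [← map_natCast C]
    exact (Nat.cast_ne_zero.mpr hn.ne').isUnit.map C
  obtain ⟨P', rfl⟩ : H ∣ P := hsf.dvd_of_forall_dvd_mul_pderiv fun i => by
    rw [← hn_unit.dvd_mul_left, ← mul_assoc, hrel i, mul_assoc]
    exact dvd_mul_of_dvd_right (dvd_mul_right H _) _
  have hP' : P'.IsHomogeneous (n - m) := hH.of_mul_left hH0 hP
  have hmn : m ≤ n := by
    have := (hH.mul hP').inj_right hP hP0
    omega
  have hrel' : ∀ i, ((n - m : ℕ) : MvPolynomial σ K) * P' * pderiv i H = m * H * pderiv i P' := by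
    intro i
    apply mul_left_cancel₀ hH0
    have := hrel i
    rw [pderiv_mul] at this
    push_cast [hmn]
    linear_combination this
  have := Nat.dvd_add (ih (n - m) (by omega) hP' (right_ne_zero_of_mul hP0) hrel') (dvd_refl m)
  rwa [Nat.sub_add_cancel hmn] at this

end Field

end MvPolynomial

theorem homogeneousComponent_seven_jacMinor {F2 F3 F4 G2 G3 G4 G5 G6 : MvPolynomial (Fin 3) ℂ}
    (hF2 : F2.IsHomogeneous 2) (hF3 : F3.IsHomogeneous 3) (hF4 : F4.IsHomogeneous 4)
    (hG2 : G2.IsHomogeneous 2) (hG3 : G3.IsHomogeneous 3) (hG4 : G4.IsHomogeneous 4)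
    (hG5 : G5.IsHomogeneous 5) (hG6 : G6.IsHomogeneous 6) (i j : Fin 3) :
    homogeneousComponent 7
        (jacMinor (X 0 + F2 + F3 + F4) (X 2 + G2 + G3 + G4 + G5 + G6) i j) =
      jacMinor F3 G6 i j + jacMinor F4 G5 i j := by
  let f : Fin 4 → MvPolynomial (Fin 3) ℂ := ![X 0, F2, F3, F4]
  let g : Fin 6 → MvPolynomial (Fin 3) ℂ := ![X 2, G2, G3, G4, G5, G6]
  have hf : ∀ a, (f a).IsHomogeneous (a + 1) := by
    simp [Fin.forall_fin_succ, f, isHomogeneous_X, hF2, hF3, hF4]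
  have hg : ∀ b, (g b).IsHomogeneous (b + 1) := by
    simp [Fin.forall_fin_succ, g, isHomogeneous_X, hG2, hG3, hG4, hG5, hG6]
  have hF : X 0 + F2 + F3 + F4 = ∑ a, f a := by simp [Fin.sum_univ_succ, f, add_assoc]
  have hG : X 2 + G2 + G3 + G4 + G5 + G6 = ∑ b, g b := by simp [Fin.sum_univ_succ, g, add_assoc]
  have key : ∀ k l, homogeneousComponent 7 (pderiv k (∑ a, f a) * pderiv l (∑ b, g b)) =
      pderiv k F3 * pderiv l G6 + pderiv k F4 * pderiv l G5 := by
    intro k l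
    rw [map_sum, map_sum, homogeneousComponent_sum_mul_sum _ _ (fun a _ => (hf a).pderiv)
      (fun b _ => (hg b).pderiv)]
    simp [Fin.sum_univ_succ, f, g]
  simp only [jacMinor, map_sub, hF, hG, key]
  ring

theorem stmt4_general (F2 F3 F4 G2 G3 G4 G5 G6 H : MvPolynomial (Fin 3) ℂ) (α : ℂ)
    (hF2 : F2.IsHomogeneous 2) (hF3 : F3.IsHomogeneous 3) (hF4 : F4.IsHomogeneous 4)
    (hG2 : G2.IsHomogeneous 2) (hG3 : G3.IsHomogeneous 3) (hG4 : G4.IsHomogeneous 4)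
    (hG5 : G5.IsHomogeneous 5) (hG6 : G6.IsHomogeneous 6)
    (hHsf : Squarefree H) (hHhom : H.IsHomogeneous 2)
    (hF4eq : F4 = H ^ 2) (hG6eq : G6 = C α * H ^ 3)
    (hbr : ∀ i j : Fin 3, (jacMinor (X 0 + F2 + F3 + F4) (X 2 + G2 + G3 + G4 + G5 + G6) i j).totalDegree < 7) :
    G5 = C ((3 / 2) * α) * H * F3 := by
  have h7 : ∀ i j, jacMinor F3 G6 i j + jacMinor F4 G5 i j = 0 := fun i j => by
    rw [← homogeneousComponent_seven_jacMinor hF2 hF3 hF4 hG2 hG3 hG4 hG5 hG6,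
      homogeneousComponent_eq_zero _ _ (hbr i j)]
  subst hF4eq hG6eq
  set P := G5 - C ((3 / 2) * α) * H * F3 with hP_def
  have hP : P.IsHomogeneous 5 := hG5.sub (by rw [mul_assoc]; exact (hHhom.mul hF3).C_mul _)
  have hC : (2 : MvPolynomial (Fin 3) ℂ) * C ((3 / 2) * α) = 3 * C α := by
    rw [← map_ofNat C 2, ← map_ofNat C 3, ← C_mul, ← C_mul]
    norm_num [← mul_assoc]
  have hJ : ∀ i j, pderiv i H * pderiv j P = pderiv j H * pderiv i P := fun i j => by
    have h : 2 * H * (pderiv i H * pderiv j P - pderiv j H * pderiv i P) = 0 := by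
      have := h7 i j
      simp only [jacMinor, pderiv_mul, pderiv_pow, pderiv_C] at this
      simp only [hP_def, map_sub, pderiv_mul, pderiv_C]
      linear_combination this - (H ^ 2 * (pderiv i H * pderiv j F3 - pderiv j H * pderiv i F3)) * hC
    exact sub_eq_zero.mp ((mul_eq_zero.mp h).resolve_left (mul_ne_zero two_ne_zero hHsf.ne_zero))
  by_contra hne
  have h25 := hHhom.dvd_of_natCast_mul_mul_pderiv_eq two_pos hHsf hP (sub_ne_zero.mpr hne)
    (hHhom.natCast_mul_mul_pderiv_eq hP hJ)
  norm_num at h25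

theorem stmt4 (F2 F3 F4 G2 G3 G4 G5 G6 H : MvPolynomial (Fin 3) ℂ) (α : ℂ)
    (hF2 : F2.IsHomogeneous 2) (hF3 : F3.IsHomogeneous 3) (hF4 : F4.IsHomogeneous 4)
    (hG2 : G2.IsHomogeneous 2) (hG3 : G3.IsHomogeneous 3) (hG4 : G4.IsHomogeneous 4)
    (hG5 : G5.IsHomogeneous 5) (hG6 : G6.IsHomogeneous 6)
    (hHsf : Squarefree H) (hHhom : H.IsHomogeneous 2) (hα : α ≠ 0)
    (hF4eq : F4 = H ^ 2) (hG6eq : G6 = C α * H ^ 3)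
    (hbr : ∀ i j : Fin 3, (jacMinor (X 0 + F2 + F3 + F4) (X 2 + G2 + G3 + G4 + G5 + G6) i j).totalDegree < 7) :
    G5 = C ((3 / 2) * α) * H * F3 :=
  stmt4_general F2 F3 F4 G2 G3 G4 G5 G6 H α hF2 hF3 hF4 hG2 hG3 hG4 hG5 hG6 hHsf hHhom hF4eq hG6eq
    hbr
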